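/- There exist r̄₀ > 0 and ε̄ > 0 such that for every three-circle configuration with parameter r₀ ∈ (0, r̄₀), every ε ∈ (0, ε̄), every v > 0, every T > 0, and every map x : [0,T] → ℝ² satisfying ‖x(s) − x(t)‖ ≤ v·|s − t| for all s,t ∈ [0,T], the following holds: if t₁ ≤ t₂ ≤ … ≤ t_k are points of [0,T] such that for each index a ∈ {1,2,3} there exists some i ∈ {1,…,k} with B(x(t_i), ε) ∩ Z_a ≠ ∅ (where B(p,ε) is the open Euclidean ball of center p and radius ε), then t_k − t₁ ≥ 1/(2v). In other words, it takes the moving ball a time of at least 1/(2v) to visit all three zones Z₁, Z₂, Z₃. -/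

import Mathlib

open RealInnerProductSpace

section Aux
variable {E : Type*} [NormedAddCommGroup E] [InnerProductSpace ℝ E]

private lemma inner_cm_aux (A B C : E) (L : ℝ) (hAB : ‖A - B‖ = L) (hAC : ‖A - C‖ = L)
    (hBC : ‖B - C‖ = L) :
    ⟪B - (3:ℝ)⁻¹ • (A + B + C), (3:ℝ)⁻¹ • (A + B + C) - A⟫ = L^2/6 := by
  have h1 : ⟪A - B, A - B⟫ = L^2 := by rw [real_inner_self_eq_norm_sq, hAB]
  have h2 : ⟪A - C, A - C⟫ = L^2 := by rw [real_inner_self_eq_norm_sq, hAC]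
  have h3 : ⟪B - C, B - C⟫ = L^2 := by rw [real_inner_self_eq_norm_sq, hBC]
  have cab := real_inner_comm A B
  have cac := real_inner_comm A C
  have cbc := real_inner_comm B C
  simp only [inner_sub_left, inner_sub_right, inner_add_left, inner_add_right,
    real_inner_smul_left, real_inner_smul_right] at h1 h2 h3 ⊢
  linarith

private lemma inner_cm' (A B C S : E) (hS : S = A + B + C) (L : ℝ) (hAB : ‖A - B‖ = L)
    (hAC : ‖A - C‖ = L) (hBC : ‖B - C‖ = L) :
    ⟪B - (3:ℝ)⁻¹ • S, (3:ℝ)⁻¹ • S - A⟫ = L^2/6 := by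
  subst hS; exact inner_cm_aux A B C L hAB hAC hBC

private lemma norm_cm_aux (A B C : E) (L : ℝ) (hAB : ‖A - B‖ = L) (hAC : ‖A - C‖ = L)
    (hBC : ‖B - C‖ = L) :
    ⟪(3:ℝ)⁻¹ • (A + B + C) - A, (3:ℝ)⁻¹ • (A + B + C) - A⟫ = L^2/3 := by
  have h1 : ⟪A - B, A - B⟫ = L^2 := by rw [real_inner_self_eq_norm_sq, hAB]
  have h2 : ⟪A - C, A - C⟫ = L^2 := by rw [real_inner_self_eq_norm_sq, hAC]
  have h3 : ⟪B - C, B - C⟫ = L^2 := by rw [real_inner_self_eq_norm_sq, hBC]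
  have cab := real_inner_comm A B
  have cac := real_inner_comm A C
  have cbc := real_inner_comm B C
  simp only [inner_sub_left, inner_sub_right, inner_add_left, inner_add_right,
    real_inner_smul_left, real_inner_smul_right] at h1 h2 h3 ⊢
  linarith

private lemma norm_cm' (A B C S : E) (hS : S = A + B + C) (L : ℝ) (hAB : ‖A - B‖ = L)
    (hAC : ‖A - C‖ = L) (hBC : ‖B - C‖ = L) :
    ‖(3:ℝ)⁻¹ • S - A‖^2 = L^2/3 := by
  subst hS
  rw [← real_inner_self_eq_norm_sq]
  exact norm_cm_aux A B C L hAB hAC hBC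

end Aux

/-- The zone `Z_a`: the convex hull of the two circles `C^j`, `j ≠ a`. -/
def zone (r₀ : ℝ) (c : Fin 3 → EuclideanSpace ℝ (Fin 2)) (a : Fin 3) :
    Set (EuclideanSpace ℝ (Fin 2)) :=
  convexHull ℝ (⋃ j ∈ ({a}ᶜ : Set (Fin 3)), Metric.sphere (c j) r₀)

set_option maxHeartbeats 1000000 in
private lemma inner_cj (r₀ : ℝ) (c : Fin 3 → EuclideanSpace ℝ (Fin 2))
    (hn : ∀ i j, i ≠ j → ‖c i - c j‖ = 1 + 2 * r₀) (a j : Fin 3) (hj : j ≠ a) :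
    ⟪c j - (3:ℝ)⁻¹ • (c 0 + c 1 + c 2), (3:ℝ)⁻¹ • (c 0 + c 1 + c 2) - c a⟫
      = (1 + 2*r₀)^2/6 := by
  fin_cases a <;> fin_cases j <;> simp only [Fin.isValue] at hj ⊢
  · exact absurd rfl hj
  · exact inner_cm' (c 0) (c 1) (c 2) _ (by abel) _
      (hn 0 1 (by decide)) (hn 0 2 (by decide)) (hn 1 2 (by decide))
  · exact inner_cm' (c 0) (c 2) (c 1) _ (by abel) _
      (hn 0 2 (by decide)) (hn 0 1 (by decide)) (hn 2 1 (by decide))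
  · exact inner_cm' (c 1) (c 0) (c 2) _ (by abel) _
      (hn 1 0 (by decide)) (hn 1 2 (by decide)) (hn 0 2 (by decide))
  · exact absurd rfl hj
  · exact inner_cm' (c 1) (c 2) (c 0) _ (by abel) _
      (hn 1 2 (by decide)) (hn 1 0 (by decide)) (hn 2 0 (by decide))
  · exact inner_cm' (c 2) (c 0) (c 1) _ (by abel) _
      (hn 2 0 (by decide)) (hn 2 1 (by decide)) (hn 0 1 (by decide))
  · exact inner_cm' (c 2) (c 1) (c 0) _ (by abel) _
      (hn 2 1 (by decide)) (hn 2 0 (by decide)) (hn 1 0 (by decide))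
  · exact absurd rfl hj

set_option maxHeartbeats 1000000 in
private lemma norm_ca (r₀ : ℝ) (c : Fin 3 → EuclideanSpace ℝ (Fin 2))
    (hn : ∀ i j, i ≠ j → ‖c i - c j‖ = 1 + 2 * r₀) (a : Fin 3) :
    ‖(3:ℝ)⁻¹ • (c 0 + c 1 + c 2) - c a‖^2 = (1 + 2*r₀)^2/3 := by
  fin_cases a
  · exact norm_cm' (c 0) (c 1) (c 2) _ (by abel) _
      (hn 0 1 (by decide)) (hn 0 2 (by decide)) (hn 1 2 (by decide))
  · exact norm_cm' (c 1) (c 0) (c 2) _ (by abel) _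
      (hn 1 0 (by decide)) (hn 1 2 (by decide)) (hn 0 2 (by decide))
  · exact norm_cm' (c 2) (c 0) (c 1) _ (by abel) _
      (hn 2 0 (by decide)) (hn 2 1 (by decide)) (hn 0 1 (by decide))

private lemma zone_lb (r₀ : ℝ) (c : Fin 3 → EuclideanSpace ℝ (Fin 2))
    (hn : ∀ i j, i ≠ j → ‖c i - c j‖ = 1 + 2 * r₀) (a : Fin 3)
    {p : EuclideanSpace ℝ (Fin 2)} (hp : p ∈ zone r₀ c a) :
    (1 + 2*r₀)^2/6 - r₀ * ‖(3:ℝ)⁻¹ • (c 0 + c 1 + c 2) - c a‖ ≤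
      ⟪p - (3:ℝ)⁻¹ • (c 0 + c 1 + c 2), (3:ℝ)⁻¹ • (c 0 + c 1 + c 2) - c a⟫ := by
  set m : EuclideanSpace ℝ (Fin 2) := (3:ℝ)⁻¹ • (c 0 + c 1 + c 2) with hm
  set n : EuclideanSpace ℝ (Fin 2) := m - c a with hnn
  set β : ℝ := (1 + 2*r₀)^2/6 - r₀ * ‖n‖ with hβ
  have hconv : Convex ℝ {q : EuclideanSpace ℝ (Fin 2) | β + ⟪m, n⟫ ≤ ⟪q, n⟫} := by
    exact convex_halfSpace_ge
      ⟨fun x y => inner_add_left x y n, fun r x => real_inner_smul_left x n r⟩ _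
  have hsub : (⋃ j ∈ ({a}ᶜ : Set (Fin 3)), Metric.sphere (c j) r₀) ⊆
      {q : EuclideanSpace ℝ (Fin 2) | β + ⟪m, n⟫ ≤ ⟪q, n⟫} := by
    intro q hq
    simp only [Set.mem_iUnion, Set.mem_compl_iff, Set.mem_singleton_iff] at hq
    obtain ⟨j, hj, hqs⟩ := hq
    have hdq : ‖q - c j‖ = r₀ := by rw [← dist_eq_norm]; exact hqs
    have key : ⟪c j - m, n⟫ = (1 + 2*r₀)^2/6 := inner_cj r₀ c hn a j hj
    have cs : ⟪q - c j, n⟫ ≥ -(r₀ * ‖n‖) := by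
      have := real_inner_le_norm (c j - q) n
      have h2 : ⟪c j - q, n⟫ = -⟪q - c j, n⟫ := by
        rw [show c j - q = -(q - c j) by abel, inner_neg_left]
      have h3 : ‖c j - q‖ = r₀ := by rw [norm_sub_rev, hdq]
      rw [h2, h3] at this
      linarith
    have hsplit : ⟪q, n⟫ - ⟪m, n⟫ = ⟪c j - m, n⟫ + ⟪q - c j, n⟫ := by
      rw [← inner_add_left, ← inner_sub_left]
      congr 1
      abel
    simp only [Set.mem_setOf_eq]
    have : β ≤ ⟪q, n⟫ - ⟪m, n⟫ := by
      rw [hsplit, key]; simp only [hβ]; linarith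
    linarith
  have := convexHull_min hsub hconv hp
  simp only [Set.mem_setOf_eq] at this
  have hsplit : ⟪p - m, n⟫ = ⟪p, n⟫ - ⟪m, n⟫ := by rw [inner_sub_left]
  rw [hsplit]
  linarith

set_option maxHeartbeats 1000000 in
private lemma sum_perm (c : Fin 3 → EuclideanSpace ℝ (Fin 2)) (a b d : Fin 3)
    (hab : a ≠ b) (had : a ≠ d) (hbd : b ≠ d) :
    c a + c b + c d = c 0 + c 1 + c 2 := by
  fin_cases a <;> fin_cases b <;> fin_cases d <;>
    simp only [Fin.isValue, ne_eq] at hab had hbd ⊢ <;>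
    first
    | exact absurd trivial hab
    | exact absurd trivial had
    | exact absurd trivial hbd
    | (simp only [Fin.zero_eta, Fin.mk_one, Fin.reduceFinMk] <;> abel)

set_option maxHeartbeats 1000000 in
private lemma legs (r₀ : ℝ) (hr0 : 0 < r₀) (hr1 : r₀ < 1/30)
    (c : Fin 3 → EuclideanSpace ℝ (Fin 2))
    (hn : ∀ i j, i ≠ j → ‖c i - c j‖ = 1 + 2 * r₀)
    (a b d : Fin 3) (hab : a ≠ b) (had : a ≠ d) (hbd : b ≠ d)
    (p q s : EuclideanSpace ℝ (Fin 2))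
    (hp : p ∈ zone r₀ c a) (hq : q ∈ zone r₀ c b) (hs : s ∈ zone r₀ c d) :
    (151:ℝ)/200 ≤ ‖p - q‖ + ‖q - s‖ := by
  set L : ℝ := 1 + 2*r₀ with hL
  set m : EuclideanSpace ℝ (Fin 2) := (3:ℝ)⁻¹ • (c 0 + c 1 + c 2) with hm
  set R : ℝ := Real.sqrt (L^2/3) with hR
  have hL1 : (1:ℝ) ≤ L := by simp only [hL]; linarith
  have hR2 : R^2 = L^2/3 := Real.sq_sqrt (by positivity)
  have hRnn : 0 ≤ R := Real.sqrt_nonneg _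
  have hnorm : ∀ i : Fin 3, ‖m - c i‖ = R := by
    intro i
    have h1 : ‖m - c i‖^2 = L^2/3 := norm_ca r₀ c hn i
    have := norm_nonneg (m - c i)
    nlinarith [h1, hR2]
  have hsumc : c a + c b + c d = c 0 + c 1 + c 2 := sum_perm c a b d hab had hbd
  have hsum : (m - c a) + (m - c b) + (m - c d) = 0 := by
    have : (m - c a) + (m - c b) + (m - c d)
        = (3:ℝ) • m - (c a + c b + c d) := by
      rw [show (3:ℝ) • m = m + m + m from by module]; abel
    rw [this, hsumc, hm]
    module
  have lba := zone_lb r₀ c hn a hp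
  have lbb := zone_lb r₀ c hn b hq
  have lbd := zone_lb r₀ c hn d hs
  rw [← hm, ← hL, hnorm a] at lba
  rw [← hm, ← hL, hnorm b] at lbb
  rw [← hm, ← hL, hnorm d] at lbd
  have cs1 : ⟪p - q, m - c a⟫ ≤ ‖p - q‖ * R := by
    have := real_inner_le_norm (p - q) (m - c a)
    rwa [hnorm a] at this
  have cs2 : ⟪s - q, m - c d⟫ ≤ ‖q - s‖ * R := by
    have := real_inner_le_norm (s - q) (m - c d)
    rwa [hnorm d, norm_sub_rev s q] at this
  have hid : ⟪p - q, m - c a⟫ + ⟪s - q, m - c d⟫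
      = ⟪p - m, m - c a⟫ + ⟪s - m, m - c d⟫ + ⟪q - m, m - c b⟫ := by
    have e1 : p - q = (p - m) + (m - q) := by abel
    have e2 : s - q = (s - m) + (m - q) := by abel
    rw [e1, e2, inner_add_left, inner_add_left]
    have e3 : ⟪m - q, m - c a⟫ + ⟪m - q, m - c d⟫ = ⟪q - m, m - c b⟫ := by
      rw [← inner_add_right]
      have e4 : (m - c a) + (m - c d) = -(m - c b) := by
        have := hsum; abel_nf; abel_nf at this; linear_combination (norm := module) this
      rw [e4, inner_neg_right, show q - m = -(m - q) from by abel, inner_neg_left]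
    linarith
  have key : ‖p - q‖ * R + ‖q - s‖ * R ≥ L^2/2 - 3 * (r₀ * R) := by
    nlinarith [cs1, cs2, hid, lba, lbb, lbd]
  have h57 : (57:ℝ)/100 < R := by nlinarith [hR2, hRnn, hL1, hr0]
  nlinarith [key, h57, hr1, hr0, hL1, norm_nonneg (p - q), norm_nonneg (q - s), hR2]

private lemma qlegs (r₀ ε : ℝ) (hr0 : 0 < r₀) (hr1 : r₀ < 1/30)
    (hε : 0 < ε) (hε1 : ε < 1/30)
    (c : Fin 3 → EuclideanSpace ℝ (Fin 2))
    (hn : ∀ i j, i ≠ j → ‖c i - c j‖ = 1 + 2 * r₀)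
    (a b d : Fin 3) (hab : a ≠ b) (had : a ≠ d) (hbd : b ≠ d)
    (xa xb xd : EuclideanSpace ℝ (Fin 2))
    (hA : (Metric.ball xa ε ∩ zone r₀ c a).Nonempty)
    (hB : (Metric.ball xb ε ∩ zone r₀ c b).Nonempty)
    (hD : (Metric.ball xd ε ∩ zone r₀ c d).Nonempty) :
    (1:ℝ)/2 ≤ ‖xa - xb‖ + ‖xb - xd‖ := by
  obtain ⟨p, hpball, hpz⟩ := hA
  obtain ⟨q, hqball, hqz⟩ := hB
  obtain ⟨s, hsball, hsz⟩ := hD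
  have h1 : ‖p - xa‖ < ε := by rw [← dist_eq_norm]; exact hpball
  have h2 : ‖q - xb‖ < ε := by rw [← dist_eq_norm]; exact hqball
  have h3 : ‖s - xd‖ < ε := by rw [← dist_eq_norm]; exact hsball
  have hleg := legs r₀ hr0 hr1 c hn a b d hab had hbd p q s hpz hqz hsz
  have t1 : ‖p - q‖ ≤ ‖p - xa‖ + ‖xa - xb‖ + ‖xb - q‖ := by
    calc ‖p - q‖ = ‖(p - xa) + (xa - xb) + (xb - q)‖ := by congr 1; abel
    _ ≤ ‖(p - xa) + (xa - xb)‖ + ‖xb - q‖ := norm_add_le _ _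
    _ ≤ ‖p - xa‖ + ‖xa - xb‖ + ‖xb - q‖ := by
        have := norm_add_le (p - xa) (xa - xb); linarith
  have t2 : ‖q - s‖ ≤ ‖q - xb‖ + ‖xb - xd‖ + ‖xd - s‖ := by
    calc ‖q - s‖ = ‖(q - xb) + (xb - xd) + (xd - s)‖ := by congr 1; abel
    _ ≤ ‖(q - xb) + (xb - xd)‖ + ‖xd - s‖ := norm_add_le _ _
    _ ≤ ‖q - xb‖ + ‖xb - xd‖ + ‖xd - s‖ := by
        have := norm_add_le (q - xb) (xb - xd); linarith
  have h2' : ‖xb - q‖ < ε := by rw [norm_sub_rev]; exact h2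
  have h3' : ‖xd - s‖ < ε := by rw [norm_sub_rev]; exact h3
  linarith

/-- In the three-circle configuration (with `r₀` and `ε` small), a ball of radius `ε` moving
with speed at most `v` needs a time of at least `1/(2v)` to visit all three zones. -/
theorem statement_15 :
    ∃ rbar > (0 : ℝ), ∃ εbar > (0 : ℝ),
      ∀ r₀ : ℝ, 0 < r₀ → r₀ < rbar → r₀ < 1 →
      ∀ c : Fin 3 → EuclideanSpace ℝ (Fin 2),
        (∀ i j, i ≠ j → dist (c i) (c j) = 1 + 2 * r₀) →
      ∀ ε : ℝ, 0 < ε → ε < εbar → ∀ v : ℝ, 0 < v → ∀ T : ℝ, 0 < T →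
      ∀ x : ℝ → EuclideanSpace ℝ (Fin 2),
        (∀ s ∈ Set.Icc (0 : ℝ) T, ∀ t ∈ Set.Icc (0 : ℝ) T, ‖x s - x t‖ ≤ v * |s - t|) →
      ∀ k : ℕ, ∀ ts : Fin (k + 1) → ℝ, Monotone ts →
        (∀ i, ts i ∈ Set.Icc (0 : ℝ) T) →
        (∀ a : Fin 3, ∃ i, (Metric.ball (x (ts i)) ε ∩ zone r₀ c a).Nonempty) →
        1 / (2 * v) ≤ ts (Fin.last k) - ts 0 := by
  refine ⟨1/30, by norm_num, 1/30, by norm_num, ?_⟩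
  intro r₀ hr0 hrbar _hr1 c hc ε hε hεbar v hv T _hT x hlip k ts hmono hIcc hzones
  have hn : ∀ i j, i ≠ j → ‖c i - c j‖ = 1 + 2 * r₀ := by
    intro i j hij; rw [← dist_eq_norm]; exact hc i j hij
  choose i hi using hzones
  -- key step: if the times for zones a, b, d are in increasing order, conclude
  have key : ∀ a b d : Fin 3, a ≠ b → a ≠ d → b ≠ d →
      ts (i a) ≤ ts (i b) → ts (i b) ≤ ts (i d) →
      1 / (2 * v) ≤ ts (Fin.last k) - ts 0 := by
    intro a b d hab had hbd hord1 hord2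
    have hsum : (1:ℝ)/2 ≤ ‖x (ts (i a)) - x (ts (i b))‖ + ‖x (ts (i b)) - x (ts (i d))‖ :=
      qlegs r₀ ε hr0 hrbar hε hεbar c hn a b d hab had hbd _ _ _ (hi a) (hi b) (hi d)
    have l1 : ‖x (ts (i a)) - x (ts (i b))‖ ≤ v * (ts (i b) - ts (i a)) := by
      have := hlip (ts (i a)) (hIcc (i a)) (ts (i b)) (hIcc (i b))
      rwa [abs_of_nonpos (by linarith), neg_sub] at this
    have l2 : ‖x (ts (i b)) - x (ts (i d))‖ ≤ v * (ts (i d) - ts (i b)) := by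
      have := hlip (ts (i b)) (hIcc (i b)) (ts (i d)) (hIcc (i d))
      rwa [abs_of_nonpos (by linarith), neg_sub] at this
    have hda : (1:ℝ)/2 ≤ v * (ts (i d) - ts (i a)) := by nlinarith
    have h0a : ts 0 ≤ ts (i a) := hmono (Fin.zero_le _)
    have hdl : ts (i d) ≤ ts (Fin.last k) := hmono (Fin.le_last _)
    rw [div_le_iff₀ (by positivity)]
    nlinarith
  rcases le_total (ts (i 0)) (ts (i 1)) with h01 | h01 <;>
    rcases le_total (ts (i 1)) (ts (i 2)) with h12 | h12 <;>
    rcases le_total (ts (i 0)) (ts (i 2)) with h02 | h02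
  · exact key 0 1 2 (by decide) (by decide) (by decide) h01 h12
  · exact key 0 1 2 (by decide) (by decide) (by decide) h01 h12
  · exact key 0 2 1 (by decide) (by decide) (by decide) h02 h12
  · exact key 2 0 1 (by decide) (by decide) (by decide) h02 h01
  · exact key 1 0 2 (by decide) (by decide) (by decide) h01 h02
  · exact key 1 2 0 (by decide) (by decide) (by decide) h12 h02
  · exact key 2 1 0 (by decide) (by decide) (by decide) h12 h01
  · exact key 2 1 0 (by decide) (by decide) (by decide) h12 h01
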